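/- Let {p_i} and {n_i} be sequences of points in Ω with Σ_{i=1}^∞ |p_i − n_i| < ∞. Then for every Lipschitz function u : Ω → ℝ the series Σ_{i=1}^∞ (u(p_i) − u(n_i)) converges absolutely, and for every ε > 0 there exists C_ε > 0 such that |Σ_{i=1}^∞ (u(p_i) − u(n_i))| ≤ C_ε ‖u‖_{L∞(Ω)} + ε·Lip(u) for all Lipschitz u : Ω → ℝ, where Lip(u) denotes the Lipschitz constant of u. In particular the distribution T defined by ⟨T,φ⟩ := Σ_{i=1}^∞ (φ(p_i) − φ(n_i)) for φ ∈ C¹_c(ℝ^N) belongs to X₀^♯(Ω). -/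

import Mathlib

open MeasureTheory Filter Topology
open scoped NNReal RealInnerProductSpace

noncomputable section

/-!
Cut the series after `M` terms, with `M` chosen so that `∑_{i ≥ M} |p_i - n_i| ≤ ε`. Each of the
first `M` dipoles is at most `2 sup_Ω |u|`, and the tail is at most `ε Lip(u)`; this gives
`C_ε = 2M + 1`. A test function is Lipschitz on the convex set `Ω` with constant
`sup_Ω |∇φ|`, so the estimate applies to it, and it yields the `X₀^♯` bound directly.
-/

/-- Euclidean space `ℝ^N`. -/
abbrev Euc (N : ℕ) := EuclideanSpace ℝ (Fin N)

/-- Test functions: `C¹` functions with compact support on `ℝ^N`. -/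
def IsTest {N : ℕ} (φ : Euc N → ℝ) : Prop :=
  ContDiff ℝ 1 φ ∧ HasCompactSupport φ

/-- `L^∞(Ω)`-type supremum of a function over the set `Ω`. -/
def supOn {N : ℕ} (Ω : Set (Euc N)) (g : Euc N → ℝ) : ℝ := sSup (g '' Ω)

/-- `f ∈ X₀(Ω)`: distributions of order one with zero average, supported in `Ω`. -/
def MemX0 {N : ℕ} (Ω : Set (Euc N)) (f : (Euc N → ℝ) →ₗ[ℝ] ℝ) : Prop :=
  (∃ C : ℝ, 0 ≤ C ∧ ∀ φ : Euc N → ℝ, IsTest φ →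
      |f φ| ≤ C * (supOn Ω (fun x => |φ x|) + supOn Ω (fun x => ‖gradient φ x‖))) ∧
  ∀ φ : Euc N → ℝ, IsTest φ → (∃ c : ℝ, ∀ x ∈ Ω, φ x = c) → f φ = 0

/-- `f ∈ X₀^♯(Ω)`. -/
def MemX0sharp {N : ℕ} (Ω : Set (Euc N)) (f : (Euc N → ℝ) →ₗ[ℝ] ℝ) : Prop :=
  MemX0 Ω f ∧ ∀ ε : ℝ, 0 < ε → ∃ C : ℝ, 0 < C ∧ ∀ φ : Euc N → ℝ, IsTest φ →
    |f φ| ≤ C * supOn Ω (fun x => |φ x|) + ε * supOn Ω (fun x => ‖gradient φ x‖)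

/-- The Wasserstein norm `W¹(f)`. -/
def W1 {N : ℕ} (f : (Euc N → ℝ) →ₗ[ℝ] ℝ) : ℝ :=
  sSup {r : ℝ | ∃ φ : Euc N → ℝ, IsTest φ ∧ (∀ x, ‖gradient φ x‖ ≤ 1) ∧ r = f φ}

section Dipole

variable {E : Type*} [SeminormedAddCommGroup E] {s : Set E} {p n : ℕ → E} {u : E → ℝ} {K : ℝ≥0}

theorem LipschitzOnWith.abs_sub_le_mul_norm_sub (hu : LipschitzOnWith K u s) (hp : ∀ i, p i ∈ s)
    (hn : ∀ i, n i ∈ s) (i : ℕ) : |u (p i) - u (n i)| ≤ K * ‖p i - n i‖ := by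
  have h := hu.dist_le_mul (p i) (hp i) (n i) (hn i)
  rwa [Real.dist_eq, dist_eq_norm] at h

theorem LipschitzOnWith.summable_abs_sub (hu : LipschitzOnWith K u s) (hp : ∀ i, p i ∈ s)
    (hn : ∀ i, n i ∈ s) (hsum : Summable fun i => ‖p i - n i‖) :
    Summable fun i => |u (p i) - u (n i)| :=
  (hsum.mul_left (K : ℝ)).of_nonneg_of_le (fun _ => abs_nonneg _)
    (hu.abs_sub_le_mul_norm_sub hp hn)

theorem LipschitzOnWith.abs_tsum_sub_le (hu : LipschitzOnWith K u s) (hp : ∀ i, p i ∈ s)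
    (hn : ∀ i, n i ∈ s) (hsum : Summable fun i => ‖p i - n i‖) {B : ℝ}
    (hB : ∀ x ∈ s, |u x| ≤ B) (M : ℕ) :
    |∑' i, (u (p i) - u (n i))| ≤ 2 * M * B + K * ∑' i, ‖p (i + M) - n (i + M)‖ := by
  have hhead : |∑ i ∈ Finset.range M, (u (p i) - u (n i))| ≤ 2 * M * B := by
    calc |∑ i ∈ Finset.range M, (u (p i) - u (n i))|
        ≤ ∑ i ∈ Finset.range M, |u (p i) - u (n i)| := Finset.abs_sum_le_sum_abs _ _
      _ ≤ ∑ _i ∈ Finset.range M, 2 * B := Finset.sum_le_sum fun i _ => by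
          linarith [abs_sub (u (p i)) (u (n i)), hB _ (hp i), hB _ (hn i)]
      _ = 2 * M * B := by rw [Finset.sum_const, Finset.card_range, nsmul_eq_mul]; ring
  have htail : |∑' i, (u (p (i + M)) - u (n (i + M)))|
      ≤ K * ∑' i, ‖p (i + M) - n (i + M)‖ := by
    rw [← tsum_mul_left]
    exact tsum_of_norm_bounded (((summable_nat_add_iff M).2 hsum).mul_left (K : ℝ)).hasSum
      fun i => (Real.norm_eq_abs _).trans_le <| hu.abs_sub_le_mul_norm_sub hp hn (i + M)
  have hsummable := (hu.summable_abs_sub hp hn hsum).of_abs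
  rw [← hsummable.sum_add_tsum_nat_add M]
  exact (abs_add_le _ _).trans (add_le_add hhead htail)

theorem exists_abs_tsum_sub_le (hp : ∀ i, p i ∈ s) (hn : ∀ i, n i ∈ s)
    (hsum : Summable fun i => ‖p i - n i‖) {ε : ℝ} (hε : 0 < ε) :
    ∃ C : ℝ, 0 < C ∧ ∀ (u : E → ℝ) (K : ℝ≥0) (B : ℝ), LipschitzOnWith K u s →
      (∀ x ∈ s, |u x| ≤ B) → |∑' i, (u (p i) - u (n i))| ≤ C * B + ε * K := by
  obtain ⟨M, hM⟩ : ∃ M : ℕ, ∑' i, ‖p (i + M) - n (i + M)‖ ≤ ε :=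
    ((tendsto_sum_nat_add fun i => ‖p i - n i‖).eventually_le_const hε).exists
  refine ⟨2 * M + 1, by positivity, fun u K B hu hB => ?_⟩
  have hB0 : 0 ≤ B := (abs_nonneg _).trans (hB _ (hp 0))
  calc |∑' i, (u (p i) - u (n i))|
      ≤ 2 * M * B + K * ∑' i, ‖p (i + M) - n (i + M)‖ := hu.abs_tsum_sub_le hp hn hsum hB M
    _ ≤ (2 * M + 1) * B + ε * K := by nlinarith [K.coe_nonneg]

end Dipole

/-- `u ↦ ∑' i, (u (p i) - u (n i))` is linear only where the series converges (elsewhere `tsum`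
takes the junk value `0`), so it is extended linearly from that subspace. -/
theorem exists_linearMap_eq_tsum_sub {α ι : Type*} (p n : ι → α) :
    ∃ T : (α → ℝ) →ₗ[ℝ] ℝ, ∀ u : α → ℝ, Summable (fun i => u (p i) - u (n i)) →
      T u = ∑' i, (u (p i) - u (n i)) := by
  let L : (α → ℝ) →ₗ[ℝ] ι → ℝ :=
    { toFun u i := u (p i) - u (n i)
      map_add' u v := by ext i; simp only [Pi.add_apply]; ring
      map_smul' c u := by ext i; simp only [Pi.smul_apply, smul_eq_mul, RingHom.id_apply]; ring }
  let S : Submodule ℝ (ι → ℝ) :=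
    { carrier := {a | Summable a}
      add_mem' := Summable.add
      zero_mem' := summable_zero
      smul_mem' c _ ha := ha.const_smul c }
  let tsumS : S →ₗ[ℝ] ℝ :=
    { toFun a := ∑' i, (a : ι → ℝ) i
      map_add' a b := a.2.tsum_add b.2
      map_smul' c a := a.2.tsum_const_smul c }
  obtain ⟨T, hT⟩ :=
    LinearMap.exists_extend (tsumS.comp (L.restrict (p := S.comap L) fun _ hu => hu))
  exact ⟨T, fun u hu => LinearMap.congr_fun hT (⟨u, hu⟩ : S.comap L)⟩

section SupOn

variable {N : ℕ} {Ω : Set (Euc N)} {g : Euc N → ℝ}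

theorem supOn_nonneg (hg : ∀ x, 0 ≤ g x) : 0 ≤ supOn Ω g :=
  Real.sSup_nonneg <| by rintro _ ⟨x, -, rfl⟩; exact hg x

theorem IsCompact.le_supOn (hΩ : IsCompact Ω) (hg : ContinuousOn g Ω) {x : Euc N} (hx : x ∈ Ω) :
    g x ≤ supOn Ω g :=
  le_csSup (hΩ.bddAbove_image hg) ⟨x, hx, rfl⟩

end SupOn

theorem norm_gradient_eq_norm_fderiv {F : Type*} [NormedAddCommGroup F] [InnerProductSpace ℝ F]
    [CompleteSpace F] (φ : F → ℝ) (x : F) :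
    ‖gradient φ x‖ = ‖fderiv ℝ φ x‖ := by
  rw [← toDual_gradient, LinearIsometryEquiv.norm_map]

theorem IsTest.lipschitzOnWith {N : ℕ} {Ω : Set (Euc N)} {φ : Euc N → ℝ} (hφ : IsTest φ)
    (hΩconv : Convex ℝ Ω) (hΩcomp : IsCompact Ω) :
    LipschitzOnWith (supOn Ω fun x => ‖gradient φ x‖).toNNReal φ Ω := by
  have hcont : Continuous fun x => ‖gradient φ x‖ := by
    simpa only [norm_gradient_eq_norm_fderiv] using (hφ.1.continuous_fderiv one_ne_zero).norm
  refine hΩconv.lipschitzOnWith_of_nnnorm_fderiv_le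
    (fun x _ => (hφ.1.differentiable one_ne_zero).differentiableAt) fun x hx => ?_
  rw [← norm_toNNReal, ← norm_gradient_eq_norm_fderiv]
  exact Real.toNNReal_le_toNNReal (hΩcomp.le_supOn hcont.continuousOn hx)

theorem memX0sharp_of_forall_le {N : ℕ} {Ω : Set (Euc N)} {f : (Euc N → ℝ) →ₗ[ℝ] ℝ}
    (hconst : ∀ φ : Euc N → ℝ, IsTest φ → (∃ c : ℝ, ∀ x ∈ Ω, φ x = c) → f φ = 0)
    (hle : ∀ ε : ℝ, 0 < ε → ∃ C : ℝ, 0 < C ∧ ∀ φ : Euc N → ℝ, IsTest φ →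
      |f φ| ≤ C * supOn Ω (fun x => |φ x|) + ε * supOn Ω (fun x => ‖gradient φ x‖)) :
    MemX0sharp Ω f := by
  refine ⟨⟨?_, hconst⟩, hle⟩
  obtain ⟨C, hC, hCle⟩ := hle 1 one_pos
  refine ⟨max C 1, hC.le.trans (le_max_left _ _), fun φ hφ => ?_⟩
  have h0 : 0 ≤ supOn Ω (fun x => |φ x|) := supOn_nonneg fun _ => abs_nonneg _
  have h1 : 0 ≤ supOn Ω (fun x => ‖gradient φ x‖) := supOn_nonneg fun _ => norm_nonneg _
  calc |f φ| ≤ C * supOn Ω (fun x => |φ x|) + 1 * supOn Ω (fun x => ‖gradient φ x‖) := hCle φ hφ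
    _ ≤ max C 1 * (supOn Ω (fun x => |φ x|) + supOn Ω (fun x => ‖gradient φ x‖)) := by
      rw [mul_add]
      gcongr
      exacts [le_max_left _ _, le_max_right _ _]

/-- Given sequences `{p_i}, {n_i} ⊂ Ω` with `Σ |p_i − n_i| < ∞`:
for every Lipschitz `u` the series `Σ (u(p_i) − u(n_i))` converges absolutely; for every
`ε > 0` there is `C_ε > 0` with `|Σ (u(p_i) − u(n_i))| ≤ C_ε ‖u‖_{L∞(Ω)} + ε·Lip(u)`
for all Lipschitz `u`; and the dipole distribution
`⟨T, φ⟩ = Σ (φ(p_i) − φ(n_i))` belongs to `X₀^♯(Ω)`. -/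
theorem statement12 {N : ℕ} (Ω : Set (Euc N)) (hΩconv : Convex ℝ Ω) (hΩcomp : IsCompact Ω)
    (p n : ℕ → Euc N) (hp : ∀ i, p i ∈ Ω) (hn : ∀ i, n i ∈ Ω)
    (hsum : Summable fun i => ‖p i - n i‖) :
    (∀ u : Euc N → ℝ, (∃ K : ℝ≥0, LipschitzOnWith K u Ω) →
      Summable fun i => |u (p i) - u (n i)|) ∧
    (∀ ε : ℝ, 0 < ε → ∃ C : ℝ, 0 < C ∧ ∀ (u : Euc N → ℝ) (K : ℝ≥0),
      LipschitzOnWith K u Ω →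
      |∑' i, (u (p i) - u (n i))| ≤ C * supOn Ω (fun x => |u x|) + ε * K) ∧
    ∃ T : (Euc N → ℝ) →ₗ[ℝ] ℝ,
      (∀ φ : Euc N → ℝ, IsTest φ → T φ = ∑' i, (φ (p i) - φ (n i))) ∧
      MemX0sharp Ω T := by
  have hsharp : ∀ ε : ℝ, 0 < ε → ∃ C : ℝ, 0 < C ∧ ∀ (u : Euc N → ℝ) (K : ℝ≥0),
      LipschitzOnWith K u Ω →
      |∑' i, (u (p i) - u (n i))| ≤ C * supOn Ω (fun x => |u x|) + ε * K := fun ε hε => by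
    obtain ⟨C, hC, hCle⟩ := exists_abs_tsum_sub_le hp hn hsum hε
    exact ⟨C, hC, fun u K hu =>
      hCle u K _ hu fun x hx => hΩcomp.le_supOn hu.continuousOn.abs hx⟩
  obtain ⟨T, hT⟩ := exists_linearMap_eq_tsum_sub p n
  have hTtest : ∀ φ : Euc N → ℝ, IsTest φ → T φ = ∑' i, (φ (p i) - φ (n i)) := fun φ hφ =>
    hT φ ((hφ.lipschitzOnWith hΩconv hΩcomp).summable_abs_sub hp hn hsum).of_abs
  refine ⟨fun u ⟨K, hu⟩ => hu.summable_abs_sub hp hn hsum, hsharp, T, hTtest,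
    memX0sharp_of_forall_le (fun φ _ ⟨c, hc⟩ => ?_) fun ε hε => ?_⟩
  · have hzero : (fun i => φ (p i) - φ (n i)) = 0 := by
      ext i; simp only [hc _ (hp i), hc _ (hn i), sub_self, Pi.zero_apply]
    rw [hT φ (hzero ▸ summable_zero), hzero]
    exact tsum_zero
  · obtain ⟨C, hC, hCle⟩ := hsharp ε hε
    refine ⟨C, hC, fun φ hφ => ?_⟩
    have h := hCle φ _ (hφ.lipschitzOnWith hΩconv hΩcomp)
    rwa [hTtest φ hφ, ← Real.coe_toNNReal _ (supOn_nonneg fun _ => norm_nonneg _)]
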